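/- Properties of the semicircle Stieltjes transform: For all z = E + iη with η > 0 one has |m_sc(z)| = |m_sc(z) + z|⁻¹ ≤ 1. Moreover there is a constant c > 0 such that for E ∈ [−10, 10] and η ∈ (0, 10], writing κ := ||E| − 2|: (i) c ≤ |m_sc(z)| ≤ 1 − cη; (ii) |∂_z m_sc(z)| ≤ c⁻¹(κ + η)^{−1/2}; (iii) |1 − m_sc(z)²| ≍ √(κ + η); (iv) Im m_sc(z) ≍ √(κ + η) if |E| ≤ 2 and Im m_sc(z) ≍ η/√(κ + η) if |E| ≥ 2. -/

import Mathlib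

open MeasureTheory ProbabilityTheory Matrix Finset
open scoped Classical

noncomputable section

namespace RBM

/-- Integer representative of `x : Fin N` in `(-N/2, N/2]`. -/
def rep {N : ℕ} (x : Fin N) : ℤ :=
  if 2 * x.val ≤ N then (x.val : ℤ) else (x.val : ℤ) - N

/-- Periodic distance `|x|` on `ℤ_N`, as a real number. -/
def zdist {N : ℕ} (x : Fin N) : ℝ := |(rep x : ℝ)|

/-- The block of indices `⟦1, W⟧` inside `ℤ_N`. -/
def inBlock {N : ℕ} (W : ℕ) (i : Fin N) : Prop := 1 ≤ i.val ∧ i.val ≤ W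

/-- Band variance profile `s_{ij} = f(i-j)` with band width `W`. -/
structure IsBandProfile {N : ℕ} (W : ℕ) (cs Cs : ℝ) (f : Fin N → ℝ) : Prop where
  nonneg : ∀ x, 0 ≤ f x
  symm : ∀ i j : Fin N, f (i - j) = f (j - i)
  sum_one : ∑ x, f x = 1
  lower : ∀ x, zdist x ≤ W → cs / W ≤ f x
  upper : ∀ x, f x ≤ if zdist x ≤ Cs * W then Cs / W else 0

/-- Entries of the variance matrix `S_ζ`. -/
def sZeta {N : ℕ} (W : ℕ) (ζ : ℝ) (f : Fin N → ℝ) (i j : Fin N) : ℝ :=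
  f (i - j) - (if inBlock W i ∧ inBlock W j then ζ * (1 + if i = j then 1 else 0) / W else 0)

/-- The random band matrix ensemble `H_ζ`: real symmetric, centered independent entries with
variance profile `S_ζ`, and all moments controlled by the standard deviation. -/
structure IsBandEnsemble {N : ℕ} (W : ℕ) (cs Cs : ℝ) (μmom : ℕ → ℝ) (ζ : ℝ)
    {Ω : Type*} [MeasurableSpace Ω] (P : Measure Ω)
    (f : Fin N → ℝ) (H : Ω → Matrix (Fin N) (Fin N) ℝ) : Prop where
  profile : IsBandProfile W cs Cs f
  meas : ∀ i j, Measurable fun ω => H ω i j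
  symm : ∀ ω, (H ω).IsSymm
  indep : iIndepFun
    (fun (p : {p : Fin N × Fin N // p.1 ≤ p.2}) ω => H ω p.1.1 p.1.2) P
  centered : ∀ i j, ∫ ω, H ω i j ∂P = 0
  variance : ∀ i j, ∫ ω, (H ω i j) ^ 2 ∂P = sZeta W ζ f i j
  moment : ∀ (p : ℕ) (i j), ∫ ω, |H ω i j| ^ p ∂P ≤ μmom p ^ p * sZeta W ζ f i j ^ ((p : ℝ) / 2)

/-- The deterministic diagonal matrix with the two spectral parameters. -/
def Zmat {N : ℕ} (W : ℕ) (z zt : ℂ) : Matrix (Fin N) (Fin N) ℂ :=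
  Matrix.diagonal fun i => if inBlock W i then z else zt

/-- The generalized resolvent `G_ζ^g(z, z̃)` of `H_ζ - diag g`. -/
def resolvent {N : ℕ} (W : ℕ) (g : Fin N → ℝ) (H : Matrix (Fin N) (Fin N) ℝ)
    (z zt : ℂ) : Matrix (Fin N) (Fin N) ℂ :=
  ((H - Matrix.diagonal g).map (fun x => (x : ℂ)) - Zmat W z zt)⁻¹

/-- The `T`-matrix `T_{ij} = ∑_k (S_ζ)_{ik} |G_{kj}|²`. -/
def Tmat {N : ℕ} (W : ℕ) (ζ : ℝ) (f : Fin N → ℝ)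
    (G : Matrix (Fin N) (Fin N) ℂ) (i j : Fin N) : ℝ :=
  ∑ k, sZeta W ζ f i k * norm (G k j) ^ 2

/-- The self-consistent equation for the vector `M`. -/
def IsSCSolution {N : ℕ} (W : ℕ) (ζ : ℝ) (f : Fin N → ℝ) (g : Fin N → ℝ)
    (z zt : ℂ) (M : Fin N → ℂ) : Prop :=
  ∀ i, (M i)⁻¹ =
    -(if inBlock W i then z else zt) - (g i : ℂ) - ∑ j, (sZeta W ζ f i j : ℂ) * M j

/-- Stieltjes transform of the semicircle law (the branch mapping `ℂ⁺` to `ℂ⁺`). -/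
def msc (z : ℂ) : ℂ := z * (-1 + (1 - 4 / z ^ 2) ^ ((1 : ℂ) / 2)) / 2

/-- Boundary value `m_sc(z̃ + i·0⁺)` for `z̃ ∈ ℂ⁺ ∪ ℝ`. -/
def mscB (z : ℂ) : ℂ :=
  if 0 < z.im then msc z
  else (-z + Complex.I * (Real.sqrt (4 - z.re ^ 2) : ℝ)) / 2

/-- The σ-algebra generated by the matrix minor obtained by removing row and column `k`. -/
def minorSigma {N : ℕ} {Ω : Type*} [MeasurableSpace Ω]
    (H : Ω → Matrix (Fin N) (Fin N) ℝ) (k : Fin N) : MeasurableSpace Ω :=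
  MeasurableSpace.comap
    (fun ω (p : {p : Fin N × Fin N // p.1 ≠ k ∧ p.2 ≠ k}) => H ω p.1.1 p.1.2) inferInstance

/-- The matrix `1 - M² S_ζ` (with `M²` the diagonal matrix with entries `M_i²`). -/
def oneSubM2S {N : ℕ} (W : ℕ) (ζ : ℝ) (f : Fin N → ℝ) (M : Fin N → ℂ) :
    Matrix (Fin N) (Fin N) ℂ :=
  1 - (Matrix.diagonal fun i => (M i) ^ 2) * (Matrix.of fun i j => ((sZeta W ζ f i j : ℝ) : ℂ))

/-- The real matrix `1 - S_ζ |M|²` (with `|M|²` the diagonal matrix with entries `|M_j|²`). -/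
def oneSubSM2 {N : ℕ} (W : ℕ) (ζ : ℝ) (f : Fin N → ℝ) (M : Fin N → ℂ) :
    Matrix (Fin N) (Fin N) ℝ :=
  1 - (Matrix.of fun i j => sZeta W ζ f i j) * (Matrix.diagonal fun j => norm (M j) ^ 2)

/-- The `ℓ∞ → ℓ∞` operator norm of a complex matrix (maximal absolute row sum). -/
def rowSumNorm {N : ℕ} (A : Matrix (Fin N) (Fin N) ℂ) : ℝ := ⨆ i, ∑ j, norm (A i j)

end RBM

open RBM

/-!
`m = m_sc(z)` is the root of `m² + z m + 1 = 0` with `|m| ≤ |m + z|` (the principal square root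
in its formula has nonnegative real part); as `|m| |m + z| = 1`, this gives `|m| ≤ 1` and
`|m| ≥ 1 / (1 + |z|)`. Taking imaginary parts of `m + z = -1 / m` gives
`Im m (1 - |m|²) = η |m|²`, whence `Im m > 0`, `|m| ≤ 1 - η |m|² / 2` and `η ≲ Im m`.
The remaining bounds are read off `v = 2m + z`, which satisfies `v² = z² - 4`: thus
`|v|² = |z - 2| |z + 2| ≍ κ + η`, `1 - m² = -m v`, `m' = -m / v`, and `Im v = 2 Im m + η ≍ Im m`
is controlled by `Re (v²) = E² - η² - 4 ≤ 0` in the bulk and by `Re v · Im v = E η` outside it.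
-/

open Complex

abbrev IsSemicircleRoot (z m : ℂ) : Prop := m ^ 2 + z * m + 1 = 0

namespace IsSemicircleRoot

variable {z m : ℂ}

lemma mul_add_self (h : IsSemicircleRoot z m) : m * (m + z) = -1 := by
  linear_combination h

lemma norm_mul_norm_add_self (h : IsSemicircleRoot z m) : ‖m‖ * ‖m + z‖ = 1 := by
  rw [← norm_mul, h.mul_add_self, norm_neg, norm_one]

lemma ne_zero (h : IsSemicircleRoot z m) : m ≠ 0 := by
  intro hm
  simpa [hm] using h.mul_add_self

lemma two_mul_add_sq (h : IsSemicircleRoot z m) : (2 * m + z) ^ 2 = z ^ 2 - 4 := by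
  linear_combination 4 * h

lemma one_sub_sq (h : IsSemicircleRoot z m) : 1 - m ^ 2 = -m * (2 * m + z) := by
  linear_combination h

lemma im_mul_one_sub_normSq (h : IsSemicircleRoot z m) :
    m.im * (1 - normSq m) = z.im * normSq m := by
  have hm := h.ne_zero
  have hnormSq : normSq m ≠ 0 := normSq_eq_zero.not.mpr hm
  have hinv : m + z = -m⁻¹ := by
    field_simp
    linear_combination h
  have him := congrArg im hinv
  simp only [add_im, neg_im, inv_im, neg_div, neg_neg] at him
  field_simp at him
  linear_combination -him

lemma norm_eq_inv_norm_add_self (h : IsSemicircleRoot z m) : ‖m‖ = ‖m + z‖⁻¹ :=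
  eq_inv_of_mul_eq_one_left h.norm_mul_norm_add_self

lemma inv_one_add_norm_le_norm (h : IsSemicircleRoot z m) (hm : ‖m‖ ≤ 1) :
    (1 + ‖z‖)⁻¹ ≤ ‖m‖ := by
  have hpos : 0 < ‖m + z‖ :=
    norm_pos_iff.2 (right_ne_zero_of_mul (h.mul_add_self ▸ neg_ne_zero.2 one_ne_zero))
  rw [h.norm_eq_inv_norm_add_self]
  exact inv_anti₀ hpos ((norm_add_le m z).trans (by linarith))

lemma im_pos (h : IsSemicircleRoot z m) (hz : 0 < z.im) (hm : ‖m‖ ≤ 1) : 0 < m.im := by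
  have hN : normSq m ≤ 1 := by rw [← Complex.sq_norm]; nlinarith [norm_nonneg m]
  have hprod : 0 < m.im * (1 - normSq m) :=
    h.im_mul_one_sub_normSq ▸ mul_pos hz (normSq_pos.2 h.ne_zero)
  nlinarith

lemma im_mul_normSq_le_im (h : IsSemicircleRoot z m) (him : 0 < m.im) :
    z.im * normSq m ≤ m.im := by
  nlinarith [h.im_mul_one_sub_normSq, normSq_nonneg m]

lemma norm_le_one_sub (h : IsSemicircleRoot z m) (hm : ‖m‖ ≤ 1) :
    ‖m‖ ≤ 1 - z.im * ‖m‖ ^ 2 / 2 := by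
  have him_le : m.im ≤ 1 := (im_le_norm m).trans hm
  have hrel := h.im_mul_one_sub_normSq
  rw [← Complex.sq_norm] at hrel
  have hsq : ‖m‖ ^ 2 ≤ 1 := by nlinarith [norm_nonneg m]
  nlinarith [mul_nonneg (sub_nonneg.2 him_le) (sub_nonneg.2 hsq), sq_nonneg (1 - ‖m‖)]

lemma im_le_sq_mul_im (h : IsSemicircleRoot z m) (hz : 0 ≤ z.im)
    (him : 0 < m.im) (hm : ‖m‖ ≤ 1) : z.im ≤ (1 + ‖z‖) ^ 2 * m.im := by
  have hinv := h.inv_one_add_norm_le_norm hm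
  have hpos : 0 < 1 + ‖z‖ := by positivity
  have hone : 1 ≤ (1 + ‖z‖) * ‖m‖ := by rwa [inv_le_iff_one_le_mul₀' hpos] at hinv
  have hrel := h.im_mul_normSq_le_im him
  rw [← Complex.sq_norm] at hrel
  nlinarith [mul_le_mul_of_nonneg_left (one_le_pow₀ (n := 2) hone) hz]

end IsSemicircleRoot

lemma two_mul_add_mul_deriv_eq_neg_of_eventually {f : ℂ → ℂ} {z : ℂ}
    (hf : DifferentiableAt ℂ f z) (hroot : ∀ᶠ w in nhds z, IsSemicircleRoot w (f w)) :
    (2 * f z + z) * deriv f z = -f z := by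
  have hderiv : HasDerivAt (fun w => f w ^ 2 + w * f w + 1)
      (2 * f z * deriv f z + (f z + z * deriv f z)) z := by
    refine (((hf.hasDerivAt.pow 2).add ((hasDerivAt_id z).mul hf.hasDerivAt)).add_const 1
      ).congr_deriv ?_
    simp only [id]
    ring
  have hzero : HasDerivAt (fun w => f w ^ 2 + w * f w + 1) 0 z :=
    (hasDerivAt_const z (0 : ℂ)).congr_of_eventuallyEq hroot
  linear_combination hderiv.unique hzero

lemma ne_zero_of_im_ne_zero {z : ℂ} (hz : z.im ≠ 0) : z ≠ 0 :=
  fun h => hz (by simp [h])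

lemma one_sub_sq_mem_slitPlane {w : ℂ} (hw : w.im ≠ 0) : 1 - w ^ 2 ∈ slitPlane := by
  rw [mem_slitPlane_iff]
  by_cases hre : w.re = 0
  · left
    simp only [sub_re, one_re, sq, mul_re, hre]
    nlinarith [sq_pos_of_ne_zero hw]
  · right
    simp only [sub_im, one_im, sq, mul_im]
    intro h
    exact mul_ne_zero (mul_ne_zero two_ne_zero hre) hw (by linear_combination -h)

lemma one_sub_four_div_sq_mem_slitPlane {z : ℂ} (hz : z.im ≠ 0) : 1 - 4 / z ^ 2 ∈ slitPlane := by
  have : 4 / z ^ 2 = (2 / z) ^ 2 := by ring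
  rw [this]
  apply one_sub_sq_mem_slitPlane
  simp [div_im, hz, ne_zero_of_im_ne_zero hz]

lemma msc_eq (z : ℂ) : msc z = z * ((1 - 4 / z ^ 2) ^ (2⁻¹ : ℂ) - 1) / 2 := by
  rw [msc, one_div]
  ring

lemma isSemicircleRoot_msc {z : ℂ} (hz : z ≠ 0) : IsSemicircleRoot z (msc z) := by
  obtain ⟨w, hw⟩ : ∃ w, (1 - 4 / z ^ 2) ^ (2⁻¹ : ℂ) = w := ⟨_, rfl⟩
  have hsq : z ^ 2 * w ^ 2 = z ^ 2 - 4 := by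
    rw [← hw, cpow_ofNat_inv_pow]
    field_simp
  rw [IsSemicircleRoot, msc_eq, hw]
  linear_combination hsq / 4

lemma norm_sub_one_le_norm_add_one {w : ℂ} (hw : 0 ≤ w.re) : ‖w - 1‖ ≤ ‖w + 1‖ := by
  rw [← sq_le_sq₀ (norm_nonneg _) (norm_nonneg _), Complex.sq_norm, Complex.sq_norm,
    normSq_apply, normSq_apply]
  simp only [sub_re, add_re, sub_im, add_im, one_re, one_im]
  nlinarith

lemma norm_msc_le_norm_msc_add_self (z : ℂ) : ‖msc z‖ ≤ ‖msc z + z‖ := by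
  have hre : 0 ≤ ((1 - 4 / z ^ 2) ^ (2⁻¹ : ℂ)).re := by
    rw [cpow_inv_two_re]
    exact Real.sqrt_nonneg _
  have hadd : msc z + z = z * ((1 - 4 / z ^ 2) ^ (2⁻¹ : ℂ) + 1) / 2 := by
    rw [msc_eq]
    ring
  rw [hadd, msc_eq, norm_div, norm_div, norm_mul, norm_mul]
  gcongr
  exact norm_sub_one_le_norm_add_one hre

lemma norm_msc_le_one {z : ℂ} (hz : z ≠ 0) : ‖msc z‖ ≤ 1 := by
  have h1 := (isSemicircleRoot_msc hz).norm_mul_norm_add_self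
  nlinarith [norm_msc_le_norm_msc_add_self z, norm_nonneg (msc z)]

lemma differentiableAt_msc {z : ℂ} (hz : z.im ≠ 0) : DifferentiableAt ℂ msc z := by
  have hinner : DifferentiableAt ℂ (fun w : ℂ => 1 - 4 / w ^ 2) z := by
    fun_prop (disch := exact pow_ne_zero 2 (ne_zero_of_im_ne_zero hz))
  have hsqrt : DifferentiableAt ℂ (fun w : ℂ => (1 - 4 / w ^ 2) ^ ((1 : ℂ) / 2)) z :=
    hinner.cpow (differentiableAt_const _) (one_sub_four_div_sq_mem_slitPlane hz)
  unfold msc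
  fun_prop

lemma two_mul_msc_add_mul_deriv_msc {z : ℂ} (hz : z.im ≠ 0) :
    (2 * msc z + z) * deriv msc z = -msc z := by
  refine two_mul_add_mul_deriv_eq_neg_of_eventually (differentiableAt_msc hz) ?_
  filter_upwards [(isOpen_ne_fun continuous_im continuous_const).mem_nhds hz] with w hw
  exact isSemicircleRoot_msc (ne_zero_of_im_ne_zero hw)

section SpectralDomain

variable {E η : ℝ} {v : ℂ}

lemma re_sq_sub_four (E η : ℝ) : (((E : ℂ) + η * I) ^ 2 - 4).re = E ^ 2 - η ^ 2 - 4 := by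
  simp [sq]

lemma im_sq_sub_four (E η : ℝ) : (((E : ℂ) + η * I) ^ 2 - 4).im = 2 * E * η := by
  simp only [sq, sub_im, mul_im, add_re, ofReal_re, mul_re, I_re, mul_zero, ofReal_im, I_im,
    mul_one, sub_self, add_zero, add_im, zero_add, im_ofNat, sub_zero]
  ring

lemma norm_sq_sub_four_sq (E η : ℝ) :
    ‖((E : ℂ) + η * I) ^ 2 - 4‖ ^ 2 = (|(|E| - 2)| ^ 2 + η ^ 2) * ((|E| + 2) ^ 2 + η ^ 2) := by
  rw [Complex.sq_norm, normSq_apply, re_sq_sub_four, im_sq_sub_four, sq_abs]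
  linear_combination (-(|E| ^ 2 + E ^ 2 - 8 + 2 * η ^ 2)) * sq_abs E

lemma norm_sq_sub_four_le (hE : |E| ≤ 10) (hη : 0 ≤ η) (hη' : η ≤ 10) :
    |(|E| - 2)| + η ≤ ‖((E : ℂ) + η * I) ^ 2 - 4‖ ∧
      ‖((E : ℂ) + η * I) ^ 2 - 4‖ ≤ 16 * (|(|E| - 2)| + η) := by
  have hsq := norm_sq_sub_four_sq E η
  have hκ : 0 ≤ |(|E| - 2)| := abs_nonneg _
  have hE0 : 0 ≤ |E| := abs_nonneg E
  have hlow : 4 ≤ (|E| + 2) ^ 2 + η ^ 2 := by nlinarith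
  have hup : (|E| + 2) ^ 2 + η ^ 2 ≤ 244 := by nlinarith
  constructor
  · rw [← pow_le_pow_iff_left₀ (by positivity) (norm_nonneg _) two_ne_zero, hsq]
    nlinarith [sq_nonneg (|(|E| - 2)| - η)]
  · rw [← pow_le_pow_iff_left₀ (norm_nonneg _) (by positivity) two_ne_zero, hsq]
    nlinarith [mul_nonneg hκ hη]

lemma norm_ofReal_add_mul_I_le (hE : |E| ≤ 10) (hη : 0 ≤ η) (hη' : η ≤ 10) :
    ‖(E : ℂ) + η * I‖ ≤ 20 := by
  calc ‖(E : ℂ) + η * I‖ ≤ |((E : ℂ) + η * I).re| + |((E : ℂ) + η * I).im| :=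
        norm_le_abs_re_add_abs_im _
    _ = |E| + η := by simp [abs_of_nonneg hη]
    _ ≤ 20 := by linarith

lemma sqrt_le_norm_of_sq_eq (hv : v ^ 2 = ((E : ℂ) + η * I) ^ 2 - 4) (hE : |E| ≤ 10)
    (hη : 0 ≤ η) (hη' : η ≤ 10) :
    √(|(|E| - 2)| + η) ≤ ‖v‖ ∧ ‖v‖ ≤ 4 * √(|(|E| - 2)| + η) := by
  obtain ⟨hlow, hup⟩ := norm_sq_sub_four_le hE hη hη'
  have hv2 : ‖v‖ ^ 2 = ‖((E : ℂ) + η * I) ^ 2 - 4‖ := by rw [← norm_pow, hv]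
  have hs : √(|(|E| - 2)| + η) ^ 2 = |(|E| - 2)| + η := Real.sq_sqrt (by positivity)
  constructor
  · rw [← pow_le_pow_iff_left₀ (by positivity) (norm_nonneg _) two_ne_zero]
    linarith
  · rw [← pow_le_pow_iff_left₀ (norm_nonneg _) (by positivity) two_ne_zero]
    nlinarith

lemma sq_re_sub_sq_im_of_sq_eq (hv : v ^ 2 = ((E : ℂ) + η * I) ^ 2 - 4) :
    v.re ^ 2 - v.im ^ 2 = E ^ 2 - η ^ 2 - 4 := by
  rw [← re_sq_sub_four, ← hv, sq v, mul_re]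
  ring

lemma re_mul_im_of_sq_eq (hv : v ^ 2 = ((E : ℂ) + η * I) ^ 2 - 4) : v.re * v.im = E * η := by
  have h := congrArg im hv
  rw [im_sq_sub_four, sq, mul_im] at h
  linarith

lemma sqrt_le_two_mul_im_of_sq_eq (hv : v ^ 2 = ((E : ℂ) + η * I) ^ 2 - 4) (hE : |E| ≤ 2)
    (hη : 0 ≤ η) (hη' : η ≤ 10) (hvim : 0 ≤ v.im) : √(|(|E| - 2)| + η) ≤ 2 * v.im := by
  have hnorm := (sqrt_le_norm_of_sq_eq hv (by linarith) hη hη').1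
  have hre := sq_re_sub_sq_im_of_sq_eq hv
  have hE2 : E ^ 2 ≤ 4 := by nlinarith [sq_abs E, abs_nonneg E]
  -- in the bulk `Re (v ^ 2) ≤ 0`, so `(Im v) ^ 2 ≥ ‖v‖ ^ 2 / 2`
  rw [← pow_le_pow_iff_left₀ (Real.sqrt_nonneg _) (by positivity) two_ne_zero]
  nlinarith [pow_le_pow_left₀ (Real.sqrt_nonneg _) hnorm 2, sq_norm_sub_sq_re v]

lemma le_two_mul_im_mul_sqrt_of_sq_eq (hv : v ^ 2 = ((E : ℂ) + η * I) ^ 2 - 4) (hE : 2 ≤ |E|)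
    (hE' : |E| ≤ 10) (hη : 0 ≤ η) (hη' : η ≤ 10) (hvim : 0 ≤ v.im) :
    η ≤ 2 * v.im * √(|(|E| - 2)| + η) := by
  have hnorm := (sqrt_le_norm_of_sq_eq hv hE' hη hη').2
  have hprod : |v.re| * v.im = |E| * η := by
    rw [← abs_of_nonneg hvim, ← abs_of_nonneg hη, ← abs_mul, ← abs_mul, re_mul_im_of_sq_eq hv]
  nlinarith [abs_re_le_norm v]

lemma im_mul_sqrt_le_of_sq_eq (hv : v ^ 2 = ((E : ℂ) + η * I) ^ 2 - 4) (hE : 2 ≤ |E|)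
    (hE' : |E| ≤ 10) (hη : 0 ≤ η) (hη' : η ≤ 10) (hηv : η ≤ v.im) :
    v.im * √(|(|E| - 2)| + η) ≤ 8 * η := by
  set κ := |(|E| - 2)|
  have hκ : κ = |E| - 2 := abs_of_nonneg (by linarith)
  have hnorm := (sqrt_le_norm_of_sq_eq hv hE' hη hη').2
  have hs : √(κ + η) ^ 2 = κ + η := Real.sq_sqrt (by positivity)
  have hprod := re_mul_im_of_sq_eq hv
  have hre_sq : 4 * κ ≤ v.re ^ 2 := by nlinarith [sq_abs E, sq_re_sub_sq_im_of_sq_eq hv]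
  -- near the edge `‖v‖ ^ 2 ≲ κ + η ≲ η` suffices; away from it `Re v` is large and
  -- `Re v * Im v = E * η` forces `Im v` to be small
  have him_sq_le : v.im ^ 2 * (κ + η) ≤ 64 * η ^ 2 := by
    rcases le_total κ η with hκη | hηκ
    · nlinarith [pow_le_pow_left₀ (norm_nonneg v) hnorm 2, sq_norm_sub_sq_re v]
    · have hE2 : E ^ 2 ≤ 100 := by nlinarith [sq_abs E, abs_nonneg E]
      have hprod_sq : v.re ^ 2 * v.im ^ 2 = E ^ 2 * η ^ 2 := by rw [← mul_pow, hprod, mul_pow]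
      nlinarith [mul_le_mul_of_nonneg_right hre_sq (sq_nonneg v.im), sq_nonneg v.im,
        mul_le_mul_of_nonneg_right hE2 (sq_nonneg η)]
  rw [← pow_le_pow_iff_left₀ (by nlinarith [Real.sqrt_nonneg (κ + η)]) (by positivity)
    two_ne_zero]
  nlinarith

end SpectralDomain

namespace IsSemicircleRoot

variable {E η : ℝ} {m : ℂ}

lemma inv_twentyOne_le_norm (h : IsSemicircleRoot (E + η * I) m) (hm : ‖m‖ ≤ 1)
    (hE : |E| ≤ 10) (hη : 0 ≤ η) (hη' : η ≤ 10) : 21⁻¹ ≤ ‖m‖ := by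
  refine le_trans ?_ (h.inv_one_add_norm_le_norm hm)
  gcongr
  linarith [norm_ofReal_add_mul_I_le hE hη hη']

lemma norm_le_one_sub_div (h : IsSemicircleRoot (E + η * I) m) (hm : ‖m‖ ≤ 1)
    (hE : |E| ≤ 10) (hη : 0 ≤ η) (hη' : η ≤ 10) : ‖m‖ ≤ 1 - η / 882 := by
  have hlow := h.inv_twentyOne_le_norm hm hE hη hη'
  have hup : ‖m‖ ≤ 1 - η * ‖m‖ ^ 2 / 2 := by simpa using h.norm_le_one_sub hm
  nlinarith [mul_le_mul hlow hlow (by norm_num) (norm_nonneg m)]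

lemma norm_one_sub_sq_le (h : IsSemicircleRoot (E + η * I) m) (hm : ‖m‖ ≤ 1)
    (hE : |E| ≤ 10) (hη : 0 ≤ η) (hη' : η ≤ 10) :
    √(|(|E| - 2)| + η) / 21 ≤ ‖1 - m ^ 2‖ ∧ ‖1 - m ^ 2‖ ≤ 4 * √(|(|E| - 2)| + η) := by
  obtain ⟨hlow, hup⟩ := sqrt_le_norm_of_sq_eq h.two_mul_add_sq hE hη hη'
  have hm21 := h.inv_twentyOne_le_norm hm hE hη hη'
  rw [h.one_sub_sq, norm_mul, norm_neg]
  constructor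
  · nlinarith [Real.sqrt_nonneg (|(|E| - 2)| + η)]
  · nlinarith [norm_nonneg m, norm_nonneg (2 * m + (E + η * I))]

lemma im_le_mul_im (h : IsSemicircleRoot (E + η * I) m) (him : 0 < m.im) (hm : ‖m‖ ≤ 1)
    (hE : |E| ≤ 10) (hη : 0 ≤ η) (hη' : η ≤ 10) : η ≤ 441 * m.im := by
  have hle : η ≤ (1 + ‖(E : ℂ) + η * I‖) ^ 2 * m.im := by
    simpa using h.im_le_sq_mul_im (by simpa using hη) him hm
  have h20 := norm_ofReal_add_mul_I_le hE hη hη'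
  have h441 : (1 + ‖(E : ℂ) + η * I‖) ^ 2 ≤ 441 := by
    nlinarith [norm_nonneg ((E : ℂ) + η * I)]
  nlinarith [mul_le_mul_of_nonneg_right h441 him.le]

lemma sqrt_div_le_im_of_abs_le_two (h : IsSemicircleRoot (E + η * I) m) (him : 0 < m.im)
    (hm : ‖m‖ ≤ 1) (hE : |E| ≤ 2) (hη : 0 ≤ η) (hη' : η ≤ 10) :
    √(|(|E| - 2)| + η) / 886 ≤ m.im ∧ m.im ≤ 2 * √(|(|E| - 2)| + η) := by
  have hv := h.two_mul_add_sq
  have hvim : (2 * m + (E + η * I)).im = 2 * m.im + η := by simp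
  have hη441 := h.im_le_mul_im him hm (by linarith) hη hη'
  have hlow := sqrt_le_two_mul_im_of_sq_eq hv hE hη hη' (by linarith)
  have hup := (sqrt_le_norm_of_sq_eq hv (by linarith) hη hη').2
  constructor
  · linarith
  · linarith [im_le_norm (2 * m + (E + η * I))]

lemma div_sqrt_div_le_im_of_two_le_abs (h : IsSemicircleRoot (E + η * I) m) (him : 0 < m.im)
    (hm : ‖m‖ ≤ 1) (hE : 2 ≤ |E|) (hE' : |E| ≤ 10) (hη : 0 < η) (hη' : η ≤ 10) :
    η / √(|(|E| - 2)| + η) / 886 ≤ m.im ∧ m.im ≤ 4 * (η / √(|(|E| - 2)| + η)) := by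
  have hv := h.two_mul_add_sq
  have hvim : (2 * m + (E + η * I)).im = 2 * m.im + η := by simp
  have hη441 := h.im_le_mul_im him hm hE' hη.le hη'
  have hs : 0 < √(|(|E| - 2)| + η) := Real.sqrt_pos.2 (by positivity)
  have hlow := le_two_mul_im_mul_sqrt_of_sq_eq hv hE hE' hη.le hη' (by linarith)
  have hup := im_mul_sqrt_le_of_sq_eq hv hE hE' hη.le hη' (by linarith)
  rw [div_div, div_le_iff₀ (by positivity), mul_div_assoc', le_div_iff₀ hs]
  constructor <;> nlinarith

end IsSemicircleRoot

lemma norm_deriv_msc_le {E η : ℝ} (hE : |E| ≤ 10) (hη : 0 < η) (hη' : η ≤ 10) :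
    ‖deriv msc (E + η * I)‖ ≤ 1 / √(|(|E| - 2)| + η) := by
  have hz : ((E : ℂ) + η * I).im ≠ 0 := by simpa using hη.ne'
  have hz0 := ne_zero_of_im_ne_zero hz
  have hderiv := congrArg norm (two_mul_msc_add_mul_deriv_msc hz)
  rw [norm_mul, norm_neg] at hderiv
  have hlow := (sqrt_le_norm_of_sq_eq (isSemicircleRoot_msc hz0).two_mul_add_sq hE hη.le hη').1
  have hs : 0 < √(|(|E| - 2)| + η) := Real.sqrt_pos.2 (by positivity)
  rw [le_div_iff₀ hs]
  nlinarith [norm_msc_le_one hz0, norm_nonneg (deriv msc (E + η * I))]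

/-- **Properties of the semicircle Stieltjes transform** (Lemma 4.1): on `ℂ⁺`,
`|m_sc(z)| = |m_sc(z) + z|⁻¹ ≤ 1`, and for `z = E + iη` with `E ∈ [-10, 10]`, `η ∈ (0, 10]`
and `κ = ||E| - 2|`: `c ≤ |m_sc| ≤ 1 - cη`, `|∂_z m_sc| ≤ c⁻¹ (κ+η)^{-1/2}`,
`|1 - m_sc²| ≍ √(κ+η)`, and `Im m_sc ≍ √(κ+η)` for `|E| ≤ 2`, `Im m_sc ≍ η/√(κ+η)`
for `|E| ≥ 2`. -/
theorem msc_properties :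
    (∀ z : ℂ, 0 < z.im →
      norm (msc z) = (norm (msc z + z))⁻¹ ∧ norm (msc z) ≤ 1) ∧
    ∃ c > (0:ℝ), ∀ E η : ℝ, E ∈ Set.Icc (-10 : ℝ) 10 → η ∈ Set.Ioc (0 : ℝ) 10 →
      (c ≤ norm (msc (E + η * Complex.I)) ∧
        norm (msc (E + η * Complex.I)) ≤ 1 - c * η) ∧
      norm (deriv msc (E + η * Complex.I))
        ≤ c⁻¹ / Real.sqrt (|(|E| - 2)| + η) ∧
      (c * Real.sqrt (|(|E| - 2)| + η) ≤ norm (1 - msc (E + η * Complex.I) ^ 2) ∧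
        norm (1 - msc (E + η * Complex.I) ^ 2)
          ≤ c⁻¹ * Real.sqrt (|(|E| - 2)| + η)) ∧
      ((|E| ≤ 2 →
          c * Real.sqrt (|(|E| - 2)| + η) ≤ (msc (E + η * Complex.I)).im ∧
          (msc (E + η * Complex.I)).im ≤ c⁻¹ * Real.sqrt (|(|E| - 2)| + η)) ∧
        (2 ≤ |E| →
          c * (η / Real.sqrt (|(|E| - 2)| + η)) ≤ (msc (E + η * Complex.I)).im ∧
          (msc (E + η * Complex.I)).im ≤ c⁻¹ * (η / Real.sqrt (|(|E| - 2)| + η)))) := by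
  refine ⟨fun z hz => ?_, 1000⁻¹, by norm_num, ?_⟩
  · have hz0 := ne_zero_of_im_ne_zero hz.ne'
    exact ⟨(isSemicircleRoot_msc hz0).norm_eq_inv_norm_add_self, norm_msc_le_one hz0⟩
  rintro E η ⟨hE₁, hE₂⟩ ⟨hη, hη'⟩
  have hE : |E| ≤ 10 := abs_le.2 ⟨hE₁, hE₂⟩
  have hz0 : (E : ℂ) + η * I ≠ 0 := ne_zero_of_im_ne_zero (by simpa using hη.ne')
  have hroot := isSemicircleRoot_msc hz0
  have hm := norm_msc_le_one hz0
  have him := hroot.im_pos (by simpa using hη) hm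
  have hs := Real.sqrt_nonneg (|(|E| - 2)| + η)
  have hηs : 0 ≤ η / √(|(|E| - 2)| + η) := by positivity
  have hderiv := norm_deriv_msc_le hE hη hη'
  obtain ⟨hsq_low, hsq_up⟩ := hroot.norm_one_sub_sq_le hm hE hη.le hη'
  rw [inv_inv]
  refine ⟨⟨by linarith [hroot.inv_twentyOne_le_norm hm hE hη.le hη'],
    by linarith [hroot.norm_le_one_sub_div hm hE hη.le hη']⟩,
    hderiv.trans (div_le_div_of_nonneg_right (by norm_num) hs), ⟨by linarith, by linarith⟩,
    fun hE2 => ?_, fun hE2 => ?_⟩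
  · obtain ⟨hlow, hup⟩ := hroot.sqrt_div_le_im_of_abs_le_two him hm hE2 hη.le hη'
    constructor <;> linarith
  · obtain ⟨hlow, hup⟩ := hroot.div_sqrt_div_le_im_of_two_le_abs him hm hE2 hE hη hη'
    constructor <;> linarith
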